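/- arXiv:1301.3985 — 4 statements merged into one kernel-verified Lean document; each statement's English description precedes it below -/
import Mathlib

section
/- Let n ≥ 2, let Tₙ be the Chebyshev polynomial of the first kind of degree n, and let z₁, z₂, z₃, z₄ be real numbers with −∞ < z₁ < z₂ < −cos(π/(2n)) and cos(π/(2n)) < z₃ < z₄ < +∞. Then, taking P = Tₙ, equality holds in the distortion inequality: −(z₃, z₁, z₂, z₄) = |(x_P(z₃), −x_P(z₁), −x_P(z₂), x_P(z₄))|. -/
open Polynomial Real

/-- Real cross ratio of four ordered points:
(a₁,a₂,a₃,a₄) = ((a₃−a₁)/(a₃−a₂)) / ((a₄−a₁)/(a₄−a₂)). -/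
noncomputable def crossRatioR (a₁ a₂ a₃ a₄ : ℝ) : ℝ :=
  ((a₃ - a₁) / (a₃ - a₂)) / ((a₄ - a₁) / (a₄ - a₂))

private lemma T_eval_neg' (n : ℕ) (x : ℝ) :
    (Polynomial.Chebyshev.T ℝ n).eval (-x) = (-1) ^ n * (Polynomial.Chebyshev.T ℝ n).eval x := by
  induction n using Nat.twoStepInduction generalizing x with
  | zero => simp [Polynomial.Chebyshev.T_zero]
  | one => simp [Polynomial.Chebyshev.T_one]
  | more k ih1 ih2 =>
    have h : ((k + 2 : ℕ) : ℤ) = (k : ℤ) + 2 := by push_cast; ring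
    have e1 : ((k + 1 : ℕ) : ℤ) = (k : ℤ) + 1 := by push_cast; ring
    rw [h, Polynomial.Chebyshev.T_add_two]
    simp only [eval_sub, eval_mul, eval_X, eval_ofNat]
    rw [← e1, ih1, ih2]
    ring

private lemma U_ge_one' (x : ℝ) (h1 : 1 ≤ x) : ∀ k : ℕ,
    1 ≤ (Polynomial.Chebyshev.U ℝ (k : ℤ)).eval x ∧
      (Polynomial.Chebyshev.U ℝ (k : ℤ)).eval x ≤
        (Polynomial.Chebyshev.U ℝ ((k : ℤ) + 1)).eval x := by
  intro k
  induction k with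
  | zero =>
    norm_num [Polynomial.Chebyshev.U_zero, Polynomial.Chebyshev.U_one]
    linarith
  | succ k ih =>
    have e1 : ((k + 1 : ℕ) : ℤ) = (k : ℤ) + 1 := by push_cast; ring
    have e2 : ((k : ℤ) + 1) + 1 = (k : ℤ) + 2 := by ring
    rw [e1]
    constructor
    · exact ih.1.trans ih.2
    · rw [e2, Polynomial.Chebyshev.U_add_two]
      simp only [eval_sub, eval_mul, eval_X, eval_ofNat]
      nlinarith [ih.1, ih.2]

private lemma U_pos' (n : ℕ) (hn : 1 ≤ n) (x : ℝ) (hx : Real.cos (π / (2 * n)) < x) :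
    0 < (Polynomial.Chebyshev.U ℝ ((n : ℤ) - 1)).eval x := by
  have hn0 : (0 : ℝ) < n := by exact_mod_cast hn
  by_cases h1 : 1 ≤ x
  · have e : ((n - 1 : ℕ) : ℤ) = (n : ℤ) - 1 := by omega
    have := (U_ge_one' x h1 (n - 1)).1
    rw [e] at this
    linarith
  · push_neg at h1
    set θ := Real.arccos x with hθdef
    have hx1 : -1 ≤ x := le_trans (Real.neg_one_le_cos _) hx.le
    have hcos : Real.cos θ = x := Real.cos_arccos hx1 h1.le
    have hθpos : 0 < θ := Real.arccos_pos.2 h1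
    have hang : 0 < π / (2 * (n : ℝ)) := by positivity
    have hθlt : θ < π / (2 * n) := by
      by_contra hcon
      push_neg at hcon
      have : Real.cos θ ≤ Real.cos (π / (2 * n)) :=
        Real.cos_le_cos_of_nonneg_of_le_pi hang.le (Real.arccos_le_pi x) hcon
      linarith
    have hnr : (1 : ℝ) ≤ (n : ℝ) := by exact_mod_cast hn
    have hle : π / (2 * (n : ℝ)) ≤ π / 2 := by
      apply div_le_div_of_nonneg_left Real.pi_pos.le two_pos
      linarith
    have hsθ : 0 < Real.sin θ :=
      Real.sin_pos_of_pos_of_lt_pi hθpos (by linarith [Real.pi_pos])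
    have hkey := Polynomial.Chebyshev.U_real_cos θ ((n : ℤ) - 1)
    have hnθ : (n : ℝ) * θ < π / 2 := by
      have := mul_lt_mul_of_pos_left hθlt hn0
      have e : (n : ℝ) * (π / (2 * n)) = π / 2 := by field_simp
      linarith [e ▸ this]
    have hsin : 0 < Real.sin ((n : ℝ) * θ) :=
      Real.sin_pos_of_pos_of_lt_pi (by positivity) (by linarith [Real.pi_pos])
    have e2 : (((n : ℤ) - 1 : ℤ) : ℝ) + 1 = (n : ℝ) := by push_cast; ring
    rw [hcos, e2] at hkey
    nlinarith [hsθ, hsin, hkey]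

private lemma T_strictMono' (n : ℕ) (hn : 1 ≤ n) :
    StrictMonoOn (fun y : ℝ => (Polynomial.Chebyshev.T ℝ n).eval y)
      (Set.Ici (Real.cos (π / (2 * n)))) := by
  apply strictMonoOn_of_deriv_pos (convex_Ici _)
  · exact (Polynomial.continuous _).continuousOn
  · intro y hy
    rw [interior_Ici] at hy
    rw [Polynomial.deriv, Polynomial.Chebyshev.T_derivative_eq_U]
    simp only [eval_mul, eval_intCast]
    have hU := U_pos' n hn y hy
    have hn0 : (0 : ℝ) < ((n : ℤ) : ℝ) := by exact_mod_cast hn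
    exact mul_pos hn0 hU

private lemma T_eval_cos_eq_zero' (n : ℕ) (hn : 1 ≤ n) :
    (Polynomial.Chebyshev.T ℝ n).eval (Real.cos (π / (2 * n))) = 0 := by
  rw [Polynomial.Chebyshev.T_real_cos]
  have hn0 : (n : ℝ) ≠ 0 := by positivity
  have : ((n : ℤ) : ℝ) * (π / (2 * n)) = π / 2 := by push_cast; field_simp
  rw [this, Real.cos_pi_div_two]

private lemma T_nonneg' (n : ℕ) (hn : 1 ≤ n) (y : ℝ) (hy : Real.cos (π / (2 * n)) ≤ y) :
    0 ≤ (Polynomial.Chebyshev.T ℝ n).eval y := by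
  rcases eq_or_lt_of_le hy with h | h
  · rw [← h, T_eval_cos_eq_zero' n hn]
  · have := (T_strictMono' n hn) (Set.self_mem_Ici) (Set.mem_Ici.2 hy) h
    simp only at this
    rw [T_eval_cos_eq_zero' n hn] at this
    linarith

/-- Equality case in Theorem 1: for `P = Tₙ` and points
`z₁ < z₂ < −cos(π/(2n))`, `cos(π/(2n)) < z₃ < z₄` equality holds in the
cross-ratio distortion inequality. -/
theorem crossRatio_distortion_equality (n : ℕ) (hn : 2 ≤ n) (z : Fin 4 → ℝ)
    (h12 : z 0 < z 1) (h2 : z 1 < -Real.cos (π / (2 * n)))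
    (h3 : Real.cos (π / (2 * n)) < z 2) (h34 : z 2 < z 3)
    (x : Fin 4 → ℝ)
    (hx : ∀ k, Real.cos (π / (2 * n)) ≤ x k ∧
      (Polynomial.Chebyshev.T ℝ n).eval (x k) =
        |(Polynomial.Chebyshev.T ℝ n).eval (z k)|) :
    -crossRatioR (z 2) (z 0) (z 1) (z 3) =
      |crossRatioR (x 2) (-(x 0)) (-(x 1)) (x 3)| := by
  have hn1 : 1 ≤ n := by omega
  set c := Real.cos (π / (2 * n)) with hc
  have hc_pos : 0 < c := by
    apply Real.cos_pos_of_mem_Ioo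
    constructor
    · have : (0:ℝ) < π / (2 * n) := by positivity
      linarith [Real.pi_pos]
    · have h2r : (2:ℝ) ≤ n := by exact_mod_cast hn
      rw [div_lt_div_iff₀ (by positivity) two_pos]
      nlinarith [Real.pi_pos]
  have hmono := T_strictMono' n hn1
  have huniq : ∀ k y, c ≤ y →
      |(Polynomial.Chebyshev.T ℝ n).eval (z k)| = (Polynomial.Chebyshev.T ℝ n).eval y →
      x k = y := by
    intro k y hy hval
    exact hmono.injOn (Set.mem_Ici.2 (hx k).1) (Set.mem_Ici.2 hy) ((hx k).2.trans hval)
  have habs_neg : ∀ w : ℝ, c ≤ -w →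
      |(Polynomial.Chebyshev.T ℝ n).eval w| = (Polynomial.Chebyshev.T ℝ n).eval (-w) := by
    intro w hw
    have hpar := T_eval_neg' n (-w)
    rw [neg_neg] at hpar
    rw [hpar, abs_mul, abs_pow, abs_neg, abs_one, one_pow, one_mul,
      abs_of_nonneg (T_nonneg' n hn1 _ hw)]
  have h0 : x 0 = -(z 0) := huniq 0 _ (by linarith) (habs_neg _ (by linarith))
  have h1 : x 1 = -(z 1) := huniq 1 _ (by linarith) (habs_neg _ (by linarith))
  have h2' : x 2 = z 2 :=
    huniq 2 _ h3.le (abs_of_nonneg (T_nonneg' n hn1 _ h3.le))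
  have h3' : x 3 = z 3 :=
    huniq 3 _ (by linarith) (abs_of_nonneg (T_nonneg' n hn1 _ (by linarith)))
  rw [h0, h1, h2', h3', neg_neg, neg_neg]
  have hneg : crossRatioR (z 2) (z 0) (z 1) (z 3) < 0 := by
    unfold crossRatioR
    apply div_neg_of_neg_of_pos
    · apply div_neg_of_neg_of_pos <;> linarith
    · apply div_pos <;> linarith
  rw [abs_of_neg hneg]
end

section
/- Let n ≥ 2 and let P(z) = Tₙ(z − cos(π/(2n))), where Tₙ is the Chebyshev polynomial of the first kind of degree n. Then for every real z ≥ 2cos(π/(2n)) equality holds in the lower bound of Corollary 3: |P(z)| = Tₙ((1/n)·sin(π/(2n))·|c₁z| − cos(π/(2n))), where c₁ = P'(0) is the coefficient of z in P. -/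
open Polynomial Real

lemma T_mono_aux (x : ℝ) (hx : 1 ≤ x) (n : ℕ) :
    1 ≤ (Polynomial.Chebyshev.T ℝ n).eval x ∧
      (Polynomial.Chebyshev.T ℝ n).eval x ≤ (Polynomial.Chebyshev.T ℝ (n + 1)).eval x := by
  induction n with
  | zero => simp [Polynomial.Chebyshev.T_zero, Polynomial.Chebyshev.T_one, hx]
  | succ n ih =>
    obtain ⟨h1, h2⟩ := ih
    have h1' : 1 ≤ (Polynomial.Chebyshev.T ℝ (n + 1)).eval x := le_trans h1 h2
    refine ⟨h1', ?_⟩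
    have hrec : (Polynomial.Chebyshev.T ℝ ((n : ℤ) + 2)) =
        2 * X * Polynomial.Chebyshev.T ℝ (n + 1) - Polynomial.Chebyshev.T ℝ n :=
      Polynomial.Chebyshev.T_add_two ℝ n
    have : ((n : ℤ) + 1 + 1) = ((n : ℤ) + 2) := by ring
    push_cast
    rw [this, hrec]
    simp only [eval_sub, eval_mul, eval_X, eval_ofNat]
    nlinarith

lemma T_nonneg_of_ge (n : ℕ) (hn : 1 ≤ n) (x : ℝ)
    (hx : Real.cos (π / (2 * n)) ≤ x) :
    0 ≤ (Polynomial.Chebyshev.T ℝ n).eval x := by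
  have hnpos : (0 : ℝ) < n := by exact_mod_cast hn
  rcases le_or_gt x 1 with hx1 | hx1
  · -- write x = cos θ with θ ∈ [0, π/(2n)]
    have hα : 0 < π / (2 * n) := by positivity
    have hαle : π / (2 * n) ≤ π := by
      rw [div_le_iff₀ (by positivity)]
      nlinarith [Real.pi_pos, (show (1:ℝ) ≤ n by exact_mod_cast hn)]
    set θ := Real.arccos x with hθ
    have hθmem : θ ∈ Set.Icc 0 (π / (2 * n)) := by
      constructor
      · exact Real.arccos_nonneg x
      · have : Real.arccos x ≤ Real.arccos (Real.cos (π / (2 * n))) := by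
          simp only [Real.arccos_eq_pi_div_two_sub_arcsin]
          have := Real.monotone_arcsin hx
          linarith
        calc θ ≤ Real.arccos (Real.cos (π / (2 * n))) := this
          _ = π / (2 * n) := Real.arccos_cos hα.le hαle
    have hxcos : Real.cos θ = x := Real.cos_arccos (by
      nlinarith [Real.cos_le_one (π / (2 * n)), Real.neg_one_le_cos (π / (2 * n))]) hx1
    rw [← hxcos, Polynomial.Chebyshev.T_real_cos]
    apply Real.cos_nonneg_of_mem_Icc
    constructor
    · push_cast; nlinarith [hθmem.1]
    · push_cast
      calc (n : ℝ) * θ ≤ n * (π / (2 * n)) := by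
            exact mul_le_mul_of_nonneg_left hθmem.2 (by positivity)
        _ = π / 2 := by field_simp
  · have := (T_mono_aux x hx1.le n).1
    linarith

/-- Equality case in Corollary 3: for `P(z) = Tₙ(z − cos(π/(2n)))` and real
`z ≥ 2cos(π/(2n))` the lower bound is attained, where `c₁ = P'(0)`. -/
theorem abs_ge_chebyshev_lower_bound_equality (n : ℕ) (hn : 2 ≤ n)
    (P : ℝ[X]) (hP : P = (Polynomial.Chebyshev.T ℝ n).comp (X - C (Real.cos (π / (2 * n)))))
    (c₁ : ℝ) (hc₁ : c₁ = P.derivative.eval 0)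
    (z : ℝ) (hz : 2 * Real.cos (π / (2 * n)) ≤ z) :
    |P.eval z| =
      (Polynomial.Chebyshev.T ℝ n).eval
        ((1 / n) * Real.sin (π / (2 * n)) * |c₁ * z| - Real.cos (π / (2 * n))) := by
  set α := π / (2 * n) with hα
  have hnpos : (0 : ℝ) < n := by exact_mod_cast (by omega : 1 ≤ n)
  have hαpos : 0 < α := by rw [hα]; positivity
  have hαlt : α < π / 2 := by
    rw [hα, div_lt_div_iff₀ (by positivity) (by norm_num)]
    nlinarith [Real.pi_pos, (show (2:ℝ) ≤ n by exact_mod_cast hn)]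
  have hcos : 0 < Real.cos α := Real.cos_pos_of_mem_Ioo ⟨by linarith, hαlt⟩
  have hsin : 0 < Real.sin α := Real.sin_pos_of_pos_of_lt_pi hαpos (by linarith [Real.pi_pos])
  have hnα : (n : ℝ) * α = π / 2 := by rw [hα]; field_simp
  -- compute c₁
  have hc₁val : c₁ = n * ((-1 : ℝ)) ^ (n + 1) / Real.sin α := by
    rw [hc₁, hP, derivative_comp]
    simp only [derivative_sub, derivative_X, derivative_C, sub_zero, mul_one,
      eval_mul, eval_comp, eval_sub, eval_X, eval_C, eval_one, zero_sub]
    rw [Polynomial.Chebyshev.T_derivative_eq_U]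
    have hcosid : -Real.cos α = Real.cos (π - α) := by rw [Real.cos_pi_sub]
    have hU : (Polynomial.Chebyshev.U ℝ ((n : ℤ) - 1)).eval (Real.cos (π - α)) *
        Real.sin (π - α) = Real.sin ((((n : ℤ) - 1 : ℤ) + 1) * (π - α)) :=
      Polynomial.Chebyshev.U_real_cos (π - α) ((n : ℤ) - 1)
    have hsinpisub : Real.sin (π - α) = Real.sin α := Real.sin_pi_sub α
    have hval : Real.sin ((((n : ℤ) - 1 : ℤ) + 1) * (π - α)) = (-1 : ℝ) ^ (n + 1) := by
      have : (((n : ℤ) - 1 : ℤ) + 1 : ℝ) = (n : ℝ) := by push_cast; ring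
      push_cast
      rw [show ((n : ℝ) - 1 + 1) = (n : ℝ) by ring, mul_sub, hnα, Real.sin_sub,
        Real.sin_nat_mul_pi, Real.sin_pi_div_two, Real.cos_pi_div_two,
        show Real.cos ((n : ℝ) * π) = (-1 : ℝ) ^ n by
          simpa using Real.cos_nat_mul_pi_sub 0 n]
      rw [pow_succ]
      ring
    rw [hcosid, eq_div_iff hsin.ne', ← hsinpisub]
    simp only [eval_mul, Polynomial.eval_intCast, Polynomial.eval_natCast, Int.cast_natCast, one_mul]
    push_cast at hU hval
    rw [mul_assoc, hU, hval]
  have hzpos : 0 < z := lt_of_lt_of_le (by linarith) hz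
  have habsc : |c₁| = n / Real.sin α := by
    rw [hc₁val, abs_div, abs_mul, abs_pow, abs_neg, abs_one, one_pow, mul_one,
      abs_of_pos hnpos, abs_of_pos hsin]
  have harg : (1 / (n : ℝ)) * Real.sin α * |c₁ * z| = z := by
    rw [abs_mul, habsc, abs_of_pos hzpos]
    field_simp
  rw [harg, hP, eval_comp, eval_sub, eval_X, eval_C]
  exact abs_of_nonneg (T_nonneg_of_ge n (by omega) _ (by linarith))
end

section
/- Let n ≥ 2 and let P(z) = Tₙ(z − cos(π/(2n))), where Tₙ is the Chebyshev polynomial of the first kind of degree n. Write c₁ = P'(0) for the coefficient of z in P and cₙ = 2^{n−1} for its leading coefficient. Then every critical value of P has absolute value exactly equal to 2·((1/n)·sin(π/(2n)))^{n/(n−1)} · |c₁ⁿ/cₙ|^{1/(n−1)}; in particular the lower bound of Corollary 4 is sharp. -/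
/-!
Everything follows from the Pell identity `Tₙ² − (X² − 1)·Uₙ₋₁² = 1` and `Tₙ' = n·Uₙ₋₁`.
With `θ = π/(2n)`, a critical point of `P` is a zero of `Uₙ₋₁(· − cos θ)`, so every critical
value has `Tₙ² = 1`. The shift sends `0` to `−cos θ`, a zero of `Tₙ`, where the identity reads
`sin² θ · Uₙ₋₁(−cos θ)² = 1`; hence `|c₁| = n / sin θ`, and the right-hand side collapses to `1`.
-/

open Polynomial Real

theorem Real.sin_pi_div_two_mul_pos {n : ℕ} (hn : n ≠ 0) : 0 < sin (π / (2 * n)) :=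
  sin_pos_of_pos_of_lt_pi (by positivity) <| div_lt_self pi_pos (by norm_cast; omega)

namespace Polynomial.Chebyshev

section CommRing

variable {R : Type*} [CommRing R]

variable (R) in
theorem T_sq_sub_X_sq_sub_one_mul_U_sq (n : ℤ) :
    T R n ^ 2 - (X ^ 2 - 1) * U R (n - 1) ^ 2 = 1 := by
  induction n using Chebyshev.induct' with
  | zero => simp
  | one => simp
  | add_two k ih _ =>
    rw [add_sub_cancel_right] at ih
    rw [show (k : ℤ) + 2 - 1 = k + 1 by ring]
    linear_combination ih + (T R (k + 2) + X * T R (k + 1) - (1 - X ^ 2) * U R k) *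
        T_eq_X_mul_T_sub_pol_U R k -
      (X ^ 2 - 1) * (U R (k + 1) + X * U R k + T R (k + 1)) * U_eq_X_mul_U_add_T R k
  | neg k ih => rwa [T_neg, U_neg_sub_one, neg_sq]

theorem eval_T_sq_sub_sq_sub_one_mul_eval_U_sq (n : ℤ) (x : R) :
    (T R n).eval x ^ 2 - (x ^ 2 - 1) * (U R (n - 1)).eval x ^ 2 = 1 := by
  simpa using congr_arg (eval x) (T_sq_sub_X_sq_sub_one_mul_U_sq R n)

theorem eval_T_sq_of_eval_U_eq_zero {n : ℤ} {x : R} (h : (U R (n - 1)).eval x = 0) :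
    (T R n).eval x ^ 2 = 1 := by
  simpa [h] using eval_T_sq_sub_sq_sub_one_mul_eval_U_sq n x

theorem one_sub_sq_mul_eval_U_sq_of_eval_T_eq_zero {n : ℤ} {x : R} (h : (T R n).eval x = 0) :
    (1 - x ^ 2) * (U R (n - 1)).eval x ^ 2 = 1 := by
  linear_combination eval_T_sq_sub_sq_sub_one_mul_eval_U_sq n x - (T R n).eval x * h

theorem eval_derivative_T_comp_X_sub_C (n : ℤ) (a z : R) :
    ((T R n).comp (X - Polynomial.C a)).derivative.eval z = n * (U R (n - 1)).eval (z - a) := by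
  simp [derivative_comp, T_derivative_eq_U]

end CommRing

theorem norm_eval_T_comp_X_sub_C_of_isCritical {n : ℕ} (hn : n ≠ 0) {a ζ : ℂ}
    (hζ : ((T ℂ n).comp (X - Polynomial.C a)).derivative.eval ζ = 0) :
    ‖((T ℂ n).comp (X - Polynomial.C a)).eval ζ‖ = 1 := by
  rw [eval_derivative_T_comp_X_sub_C, mul_eq_zero] at hζ
  have hU := hζ.resolve_left (by exact_mod_cast hn)
  simpa using Complex.norm_eq_one_of_pow_eq_one (eval_T_sq_of_eval_U_eq_zero hU) two_ne_zero

theorem eval_T_neg_cos_pi_div_two_mul (n : ℕ) (hn : n ≠ 0) :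
    (T ℝ n).eval (-cos (π / (2 * n))) = 0 := by
  have hnθ : ((n : ℤ) : ℝ) * (π / (2 * n)) = π / 2 := by push_cast; field_simp
  rw [T_eval_neg, T_real_cos, hnθ, cos_pi_div_two, mul_zero]

theorem norm_eval_U_neg_cos_pi_div_two_mul {n : ℕ} (hn : n ≠ 0) :
    ‖(U ℂ (n - 1 : ℤ)).eval (-((cos (π / (2 * n)) : ℝ) : ℂ))‖ = (sin (π / (2 * n)))⁻¹ := by
  rw [← Complex.ofReal_neg, ← complex_ofReal_eval_U, Complex.norm_real, norm_eq_abs]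
  have key := one_sub_sq_mul_eval_U_sq_of_eval_T_eq_zero (eval_T_neg_cos_pi_div_two_mul n hn)
  rw [neg_sq, ← sin_sq, ← sq_abs ((U ℝ _).eval _), ← mul_pow] at key
  have hsin := (sin_pi_div_two_mul_pos hn).le
  exact eq_inv_of_mul_eq_one_right ((pow_eq_one_iff_of_nonneg (by positivity) two_ne_zero).mp key)

end Polynomial.Chebyshev

open Polynomial.Chebyshev

theorem two_mul_rpow_mul_inv_pow_div_rpow {x : ℝ} (hx : 0 < x) {n : ℕ} (hn : 1 < n) :
    2 * x ^ ((n : ℝ) / ((n : ℝ) - 1)) * (x⁻¹ ^ n / 2 ^ (n - 1)) ^ ((1 : ℝ) / ((n : ℝ) - 1)) =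
      1 := by
  have hm : (n : ℝ) - 1 ≠ 0 := sub_ne_zero.mpr (by exact_mod_cast hn.ne')
  have h2 : ((2 : ℝ) ^ (n - 1)) ^ ((1 : ℝ) / ((n : ℝ) - 1)) = 2 := by
    rw [← rpow_natCast, ← rpow_mul zero_le_two, Nat.cast_sub hn.le, Nat.cast_one,
      mul_one_div_cancel hm, rpow_one]
  rw [div_rpow (by positivity) (by positivity), h2, inv_pow, inv_rpow (by positivity),
    ← rpow_natCast, ← rpow_mul hx.le, mul_one_div]
  field_simp

/-- Sharpness of Corollary 4: for `P(z) = Tₙ(z − cos(π/(2n)))`, with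
`c₁ = P'(0)` and leading coefficient `cₙ = 2^{n−1}`, every critical value of `P`
has modulus exactly `2·((1/n)·sin(π/(2n)))^{n/(n−1)}·|c₁ⁿ/cₙ|^{1/(n−1)}`. -/
theorem critical_value_bound_sharp (n : ℕ) (hn : 2 ≤ n)
    (P : ℂ[X]) (hP : P = (Polynomial.Chebyshev.T ℂ n).comp (X - C ((Real.cos (π / (2 * n)) : ℝ) : ℂ)))
    (c₁ : ℂ) (hc₁ : c₁ = P.derivative.eval 0) (cₙ : ℂ) (hcₙ : cₙ = 2 ^ (n - 1)) :
    ∀ ζ : ℂ, P.derivative.eval ζ = 0 →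
      ‖P.eval ζ‖ =
        2 * ((1 / n) * Real.sin (π / (2 * n))) ^ ((n : ℝ) / ((n : ℝ) - 1)) *
          ‖c₁ ^ n / cₙ‖ ^ ((1 : ℝ) / ((n : ℝ) - 1)) := by
  intro ζ hζ
  subst hP hc₁ hcₙ
  have hn0 : n ≠ 0 := by omega
  rw [norm_eval_T_comp_X_sub_C_of_isCritical hn0 hζ, norm_div, norm_pow, norm_pow,
    Complex.norm_two, eval_derivative_T_comp_X_sub_C, zero_sub, Int.cast_natCast, norm_mul,
    Complex.norm_natCast, norm_eval_U_neg_cos_pi_div_two_mul hn0, one_div_mul_eq_div,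
    ← div_eq_mul_inv, ← inv_div (sin _) (n : ℝ)]
  have hsin := sin_pi_div_two_mul_pos hn0
  exact (two_mul_rpow_mul_inv_pow_div_rpow (by positivity) hn).symm
end

section
/- Let n ≥ 2 and let Tₙ be the Chebyshev polynomial of the first kind of degree n. For y > 0 let g(y) denote the unique real number x ≥ cos(π/(2n)) with Tₙ(x) = y. Then as y → +∞, g(y) = 2^{(1−n)/n}·y^{1/n} + 2^{(−n−1)/n}·y^{−1/n} + o(y^{−1/n}); that is, (g(y) − 2^{(1−n)/n}·y^{1/n} − 2^{(−n−1)/n}·y^{−1/n})·y^{1/n} → 0 as y → +∞. -/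
open Polynomial Real

lemma T_cosh_aux (n : ℤ) (t : ℝ) :
    (Chebyshev.T ℝ n).eval (Real.cosh t) = Real.cosh (n * t) := by
  have h : (((Chebyshev.T ℝ n).eval (Real.cosh t) : ℝ) : ℂ) = ((Real.cosh (n * t) : ℝ) : ℂ) := by
    rw [Chebyshev.complex_ofReal_eval_T, Complex.ofReal_cosh, Complex.ofReal_cosh,
      ← Complex.cos_mul_I, ← Complex.cos_mul_I, Chebyshev.T_complex_cos]
    push_cast
    ring_nf
  exact_mod_cast h

lemma T_eval_half_add_inv (n : ℤ) (u : ℝ) (hu : 0 < u) :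
    (Chebyshev.T ℝ n).eval ((u + u⁻¹) / 2) = (u ^ (n : ℝ) + u ^ (-(n : ℝ))) / 2 := by
  have h1 : (u + u⁻¹) / 2 = Real.cosh (Real.log u) := by
    rw [Real.cosh_eq, Real.exp_log hu, Real.exp_neg, Real.exp_log hu]
  rw [h1, T_cosh_aux, Real.cosh_eq, Real.rpow_def_of_pos hu, Real.rpow_def_of_pos hu]
  ring_nf

lemma T_abs_le_one (n : ℤ) (x : ℝ) (h1 : -1 ≤ x) (h2 : x ≤ 1) :
    |(Chebyshev.T ℝ n).eval x| ≤ 1 := by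
  rw [← Real.cos_arccos h1 h2, Chebyshev.T_real_cos]
  exact Real.abs_cos_le_one _

lemma half_add_inv_lt {A B : ℝ} (hA : 1 ≤ A) (hAB : A < B) :
    (A + A⁻¹) / 2 < (B + B⁻¹) / 2 := by
  have hA0 : (0:ℝ) < A := lt_of_lt_of_le one_pos hA
  have hB0 : (0:ℝ) < B := lt_trans hA0 hAB
  have h1 : (1:ℝ) < A * B := by nlinarith
  have key : A⁻¹ - B⁻¹ = (B - A) / (A * B) := by field_simp
  have h2 : (B - A) / (A * B) < B - A := by
    rw [div_lt_iff₀ (by positivity)]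
    nlinarith [mul_pos (sub_pos.mpr hAB) (sub_pos.mpr h1)]
  have h3 : A⁻¹ - B⁻¹ < B - A := key ▸ h2
  linarith

lemma T_strictMonoOn (n : ℕ) (hn : 1 ≤ n) :
    StrictMonoOn (fun x : ℝ => (Chebyshev.T ℝ (n : ℤ)).eval x) (Set.Ici 1) := by
  intro x hx y hy hxy
  simp only [Set.mem_Ici] at hx hy
  have hx0 : (0:ℝ) ≤ x ^ 2 - 1 := by nlinarith
  have hy0 : (0:ℝ) ≤ y ^ 2 - 1 := by nlinarith
  set u := x + Real.sqrt (x ^ 2 - 1) with hu_def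
  set v := y + Real.sqrt (y ^ 2 - 1) with hv_def
  have hsx := Real.sq_sqrt hx0
  have hsy := Real.sq_sqrt hy0
  have hsx0 := Real.sqrt_nonneg (x ^ 2 - 1)
  have hsy0 := Real.sqrt_nonneg (y ^ 2 - 1)
  have hu1 : 1 ≤ u := by simp only [hu_def]; nlinarith
  have hv1 : 1 ≤ v := by simp only [hv_def]; nlinarith
  have huv : u < v := by
    have : Real.sqrt (x ^ 2 - 1) ≤ Real.sqrt (y ^ 2 - 1) :=
      Real.sqrt_le_sqrt (by nlinarith)
    simp only [hu_def, hv_def]; linarith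
  have hu0 : (0:ℝ) < u := by linarith
  have hv0 : (0:ℝ) < v := by linarith
  have hxu : x = (u + u⁻¹) / 2 := by
    have : u * (x - Real.sqrt (x ^ 2 - 1)) = 1 := by simp only [hu_def]; nlinarith
    have h2 : u⁻¹ = x - Real.sqrt (x ^ 2 - 1) := by
      field_simp at this ⊢; linarith [this]
    rw [h2]; simp only [hu_def]; ring
  have hyv : y = (v + v⁻¹) / 2 := by
    have : v * (y - Real.sqrt (y ^ 2 - 1)) = 1 := by simp only [hv_def]; nlinarith
    have h2 : v⁻¹ = y - Real.sqrt (y ^ 2 - 1) := by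
      field_simp at this ⊢; linarith [this]
    rw [h2]; simp only [hv_def]; ring
  simp only
  rw [hxu, hyv, T_eval_half_add_inv _ _ hu0, T_eval_half_add_inv _ _ hv0]
  have hN : (0:ℝ) < ((n:ℤ) : ℝ) := by exact_mod_cast Nat.pos_of_ne_zero (by omega)
  set N : ℝ := ((n:ℤ) : ℝ)
  have hA : 1 ≤ u ^ N := Real.one_le_rpow hu1 hN.le
  have hAB : u ^ N < v ^ N := Real.rpow_lt_rpow hu0.le huv hN
  rw [Real.rpow_neg hu0.le, Real.rpow_neg hv0.le]
  exact half_add_inv_lt hA hAB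

open Filter

set_option maxHeartbeats 1000000 in
/-- Asymptotics of the inverse of `Tₙ` on `[cos(π/(2n)), ∞)`: if `g(y)` is the unique
`x ≥ cos(π/(2n))` with `Tₙ(x) = y`, then
`g(y) = 2^{(1−n)/n}·y^{1/n} + 2^{(−n−1)/n}·y^{−1/n} + o(y^{−1/n})` as `y → ∞`. -/
theorem chebyshev_inverse_asymptotics (n : ℕ) (hn : 2 ≤ n) (g : ℝ → ℝ)
    (hg : ∀ y : ℝ, 0 < y → Real.cos (π / (2 * n)) ≤ g y ∧
      (Polynomial.Chebyshev.T ℝ n).eval (g y) = y) :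
    Tendsto (fun y : ℝ =>
        (g y - (2 : ℝ) ^ ((1 - (n : ℝ)) / n) * y ^ ((1 : ℝ) / n) -
          (2 : ℝ) ^ ((-(n : ℝ) - 1) / n) * y ^ (-(1 : ℝ) / n)) * y ^ ((1 : ℝ) / n))
      atTop (nhds 0) := by
  set N : ℝ := (n : ℝ) with hN_def
  have hN2 : (2:ℝ) ≤ N := by rw [hN_def]; exact_mod_cast hn
  have hN : (0:ℝ) < N := by linarith
  have h1N0 : (0:ℝ) < 1/N := by positivity
  have h1N : (1:ℝ)/N ≤ 1 := by rw [div_le_one hN]; linarith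
  have h2N : (2:ℝ)/N ≤ 1 := by rw [div_le_one hN]; linarith
  -- the explicit formula for g
  have hform : ∀ y : ℝ, 2 ≤ y →
      g y = ((y + Real.sqrt (y^2 - 1)) ^ ((1:ℝ)/N) +
        ((y + Real.sqrt (y^2 - 1)) ^ ((1:ℝ)/N))⁻¹) / 2 := by
    intro y hy
    have hy0 : (0:ℝ) < y := by linarith
    have h01 : (0:ℝ) ≤ y^2 - 1 := by nlinarith
    have hsq : Real.sqrt (y^2-1) ^ 2 = y^2 - 1 := Real.sq_sqrt h01
    have hsq0 : 0 ≤ Real.sqrt (y^2-1) := Real.sqrt_nonneg _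
    set s := y + Real.sqrt (y^2-1) with hs_def
    set u := s ^ ((1:ℝ)/N) with hu_def
    clear_value s u
    have hs1 : (1:ℝ) ≤ s := by rw [hs_def]; linarith
    have hs0 : (0:ℝ) < s := by linarith
    have hu1 : (1:ℝ) ≤ u := by
      rw [hu_def]
      calc (1:ℝ) = 1 ^ ((1:ℝ)/N) := (Real.one_rpow _).symm
        _ ≤ s ^ ((1:ℝ)/N) := Real.rpow_le_rpow zero_le_one hs1 h1N0.le
    have hu0 : (0:ℝ) < u := by linarith
    have huinv : 0 < u⁻¹ := inv_pos.mpr hu0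
    have humul : u * u⁻¹ = 1 := mul_inv_cancel₀ hu0.ne'
    have hx1 : (1:ℝ) ≤ (u + u⁻¹)/2 := by
      nlinarith [mul_nonneg (sq_nonneg (u-1)) huinv.le, humul]
    have hTeval : (Chebyshev.T ℝ (n:ℤ)).eval ((u + u⁻¹)/2) = y := by
      rw [T_eval_half_add_inv _ _ hu0]
      have hNn : (((n:ℤ)):ℝ) = N := by rw [hN_def]; push_cast; rfl
      rw [hNn]
      have h1 : u ^ N = s := by
        rw [hu_def, ← Real.rpow_mul hs0.le, one_div_mul_cancel hN.ne', Real.rpow_one]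
      have h2 : u ^ (-N) = s⁻¹ := by
        rw [Real.rpow_neg hu0.le, h1]
      rw [h1, h2]
      have hinv : s⁻¹ = y - Real.sqrt (y^2-1) := by
        have hm : s * (y - Real.sqrt (y^2-1)) = 1 := by
          rw [hs_def]; nlinarith
        exact inv_eq_of_mul_eq_one_right hm
      rw [hinv, hs_def]; ring
    obtain ⟨hg1, hg2⟩ := hg y hy0
    have hcos : 0 ≤ Real.cos (π / (2 * N)) := by
      apply Real.cos_nonneg_of_mem_Icc
      constructor
      · have : 0 ≤ π / (2 * N) := by positivity
        linarith [Real.pi_pos]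
      · rw [div_le_div_iff₀ (by positivity) two_pos]
        nlinarith [Real.pi_pos]
    have hgy1 : 1 < g y := by
      by_contra h
      push_neg at h
      have habs := T_abs_le_one (n:ℤ) (g y) (by linarith) h
      rw [hg2] at habs
      linarith [le_abs_self y]
    exact (T_strictMonoOn n (by omega)).injOn (Set.mem_Ici.mpr hgy1.le)
      (Set.mem_Ici.mpr hx1) (hg2.trans hTeval.symm)
  -- key bounds
  have key : ∀ y : ℝ, 2 ≤ y →
      -(y⁻¹) ≤ (g y - (2 : ℝ) ^ ((1 - N) / N) * y ^ ((1 : ℝ) / N) -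
          (2 : ℝ) ^ ((-N - 1) / N) * y ^ (-(1 : ℝ) / N)) * y ^ ((1 : ℝ) / N) ∧
      (g y - (2 : ℝ) ^ ((1 - N) / N) * y ^ ((1 : ℝ) / N) -
          (2 : ℝ) ^ ((-N - 1) / N) * y ^ (-(1 : ℝ) / N)) * y ^ ((1 : ℝ) / N) ≤ y⁻¹ := by
    intro y hy
    have hy0 : (0:ℝ) < y := by linarith
    have hy1 : (1:ℝ) ≤ y := by linarith
    have hinv : (0:ℝ) < y⁻¹ := inv_pos.mpr hy0
    have hinv2 : y⁻¹ ≤ 1/2 := by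
      have := inv_anti₀ two_pos hy
      norm_num at this ⊢
      linarith
    have hyy : y * y⁻¹ = 1 := mul_inv_cancel₀ hy0.ne'
    have h01 : (0:ℝ) ≤ y^2 - 1 := by nlinarith
    set w := Real.sqrt (y^2-1) with hw_def
    set s := y + w with hs_def
    set c : ℝ := 2 ^ ((1:ℝ)/N) with hc_def
    set d : ℝ := 2 ^ (-((1:ℝ)/N)) with hd_def
    set q : ℝ := y ^ ((1:ℝ)/N) with hq_def
    set u : ℝ := s ^ ((1:ℝ)/N) with hu_def
    clear_value w s c d q u
    have hw : w ^ 2 = y ^ 2 - 1 := by rw [hw_def]; exact Real.sq_sqrt h01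
    have hw0 : 0 ≤ w := by rw [hw_def]; exact Real.sqrt_nonneg _
    have hs1 : (1:ℝ) ≤ s := by rw [hs_def]; linarith
    have hs0 : (0:ℝ) < s := by linarith
    have hc0 : 0 < c := by rw [hc_def]; exact Real.rpow_pos_of_pos two_pos _
    have hd0 : 0 < d := by rw [hd_def]; exact Real.rpow_pos_of_pos two_pos _
    have hq0 : 0 < q := by rw [hq_def]; exact Real.rpow_pos_of_pos hy0 _
    have hu0 : 0 < u := by rw [hu_def]; exact Real.rpow_pos_of_pos hs0 _
    have hc2 : c ≤ 2 := by
      rw [hc_def]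
      calc (2:ℝ) ^ ((1:ℝ)/N) ≤ 2 ^ (1:ℝ) := Real.rpow_le_rpow_of_exponent_le one_le_two h1N
        _ = 2 := Real.rpow_one 2
    have hd1 : d ≤ 1 := by
      rw [hd_def]
      exact Real.rpow_le_one_of_one_le_of_nonpos one_le_two (by linarith)
    have hd_eq : d = c⁻¹ := by
      rw [hd_def, hc_def, Real.rpow_neg (by norm_num)]
    -- scalar rewrites
    have ha : (2:ℝ) ^ ((1 - N)/N) = c/2 := by
      rw [show (1 - N)/N = 1/N - 1 by field_simp, Real.rpow_sub two_pos, Real.rpow_one, hc_def]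
    have hb : (2:ℝ) ^ ((-N - 1)/N) = d/2 := by
      rw [show (-N - 1)/N = -(1/N) - 1 by field_simp; ring, Real.rpow_sub two_pos,
        Real.rpow_one, hd_def]
    have hqm : y ^ (-(1:ℝ)/N) * q = 1 := by
      rw [hq_def, ← Real.rpow_add hy0, show -(1:ℝ)/N + (1:ℝ)/N = 0 by ring, Real.rpow_zero]
    have hqm' : d * (y ^ (-(1:ℝ)/N) * q) = d := by rw [hqm, mul_one]
    have hq2 : q * q = y ^ ((2:ℝ)/N) := by
      rw [hq_def, ← Real.rpow_add hy0]; congr 1; ring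
    have F6 : q * q ≤ y := by
      rw [hq2]
      calc y ^ ((2:ℝ)/N) ≤ y ^ (1:ℝ) := Real.rpow_le_rpow_of_exponent_le hy1 h2N
        _ = y := Real.rpow_one y
    -- upper bound for s
    have hs2y : s ≤ 2*y := by
      have hwy : w ≤ y := by
        rw [hw_def]
        have h14 : Real.sqrt (y^2-1) ≤ Real.sqrt (y^2) := Real.sqrt_le_sqrt (by linarith)
        rwa [Real.sqrt_sq hy0.le] at h14
      rw [hs_def]; linarith
    have h2y : (2*y) ^ ((1:ℝ)/N) = c * q := by
      rw [hc_def, hq_def]; exact Real.mul_rpow (by norm_num) hy0.le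
    have hucq : u ≤ c * q := by
      rw [← h2y, hu_def]
      exact Real.rpow_le_rpow hs0.le hs2y h1N0.le
    have F1 : u * q ≤ c * (q * q) := by
      have h := mul_le_mul_of_nonneg_right hucq hq0.le
      linarith [h]
    -- small nonlinear scalar facts, proven with explicit products
    have hz0 : (0:ℝ) ≤ y⁻¹ * y⁻¹ := by positivity
    have hz4 : y⁻¹ * y⁻¹ ≤ 1/4 := by
      have := mul_le_mul hinv2 hinv2 hinv.le (by norm_num : (0:ℝ) ≤ 1/2)
      linarith
    have h9 : y * (y⁻¹*y⁻¹) = y⁻¹ := by field_simp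
    -- lower bound for s
    have hwlow : y - y⁻¹ ≤ w := by
      rw [hw_def, Real.le_sqrt (by linarith) h01]
      have expand : (y - y⁻¹)^2 = y^2 - 2*(y*y⁻¹) + y⁻¹*y⁻¹ := by ring
      rw [expand, hyy]
      linarith
    have ht : (0:ℝ) < 1 - y⁻¹*y⁻¹/2 := by linarith
    have ht1 : 1 - y⁻¹*y⁻¹/2 ≤ 1 := by linarith
    have hslow : 2*y*(1 - y⁻¹*y⁻¹/2) ≤ s := by
      rw [hs_def]
      have expand : 2*y*(1 - y⁻¹*y⁻¹/2) = 2*y - y*(y⁻¹*y⁻¹) := by ring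
      rw [expand, h9]
      linarith
    have hult : c * q * (1 - y⁻¹*y⁻¹/2) ≤ u := by
      have step1 : (1 - y⁻¹*y⁻¹/2) ≤ (1 - y⁻¹*y⁻¹/2) ^ ((1:ℝ)/N) := by
        have h := Real.rpow_le_rpow_of_exponent_ge ht ht1 h1N
        rwa [Real.rpow_one] at h
      calc c * q * (1 - y⁻¹*y⁻¹/2)
          ≤ c * q * (1 - y⁻¹*y⁻¹/2) ^ ((1:ℝ)/N) :=
            mul_le_mul_of_nonneg_left step1 (by positivity)
        _ = (2*y*(1 - y⁻¹*y⁻¹/2)) ^ ((1:ℝ)/N) := by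
            rw [Real.mul_rpow (by positivity) ht.le, h2y]
        _ ≤ u := by
            rw [hu_def]
            exact Real.rpow_le_rpow (by positivity) hslow h1N0.le
    have F2 : c * (q*q) - c * (q*q) * (y⁻¹*y⁻¹)/2 ≤ u * q := by
      have h := mul_le_mul_of_nonneg_right hult hq0.le
      linarith [h]
    have hcQy : c * (q*q) * (y⁻¹*y⁻¹) ≤ 2*y⁻¹ := by
      have hcq2y : c * (q*q) ≤ 2*y :=
        mul_le_mul hc2 F6 (by positivity) (by norm_num)
      have h10 := mul_le_mul_of_nonneg_right hcq2y (by positivity : (0:ℝ) ≤ y⁻¹*y⁻¹)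
      linarith [h10, h9]
    have F3 : d ≤ u⁻¹ * q := by
      have hinvu : (c*q)⁻¹ ≤ u⁻¹ := inv_anti₀ hu0 hucq
      have h := mul_le_mul_of_nonneg_right hinvu hq0.le
      have heq : (c*q)⁻¹ * q = d := by
        rw [hd_eq]; field_simp
      linarith [h, heq]
    have F4 : u⁻¹ * q ≤ d + d * (y⁻¹*y⁻¹) := by
      have hcq10 : 0 < c * q * (1 - y⁻¹*y⁻¹/2) := mul_pos (mul_pos hc0 hq0) ht
      have hu_inv_le : u⁻¹ ≤ (c * q * (1 - y⁻¹*y⁻¹/2))⁻¹ := inv_anti₀ hcq10 hult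
      have hmul := mul_le_mul_of_nonneg_right hu_inv_le hq0.le
      have hqinv : q⁻¹ * q = 1 := inv_mul_cancel₀ hq0.ne'
      have heq : (c * q * (1 - y⁻¹*y⁻¹/2))⁻¹ * q = d * (1 - y⁻¹*y⁻¹/2)⁻¹ := by
        rw [hd_eq, mul_inv, mul_inv]
        calc c⁻¹ * q⁻¹ * (1 - y⁻¹*y⁻¹/2)⁻¹ * q
            = c⁻¹ * (1 - y⁻¹*y⁻¹/2)⁻¹ * (q⁻¹ * q) := by ring
          _ = c⁻¹ * (1 - y⁻¹*y⁻¹/2)⁻¹ := by rw [hqinv, mul_one]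
      have hr : (1 - y⁻¹*y⁻¹/2)⁻¹ ≤ 1 + y⁻¹*y⁻¹ := by
        rw [inv_eq_one_div, div_le_iff₀ ht]
        have hzz : (y⁻¹*y⁻¹)*(y⁻¹*y⁻¹) ≤ (1/4)*(y⁻¹*y⁻¹) :=
          mul_le_mul_of_nonneg_right hz4 hz0
        linarith [hzz]
      have h11 := mul_le_mul_of_nonneg_left hr hd0.le
      linarith [hmul, heq, h11]
    have hdyy : d * (y⁻¹*y⁻¹) ≤ y⁻¹ := by
      have h12 : d * (y⁻¹*y⁻¹) ≤ 1 * (y⁻¹*y⁻¹) := mul_le_mul_of_nonneg_right hd1 hz0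
      have h13 : y⁻¹ * y⁻¹ ≤ (1/2) * y⁻¹ := mul_le_mul_of_nonneg_right hinv2 hinv.le
      linarith
    have hgu : (y + Real.sqrt (y^2-1)) ^ ((1:ℝ)/N) = u := by
      rw [hu_def, hs_def, hw_def]
    rw [hform y hy, hgu, ha, hb]
    constructor
    · linarith [F2, F3, hcQy, hqm', hinv.le]
    · linarith [F1, F4, hdyy, hqm', hinv.le]
  -- squeeze
  refine tendsto_of_tendsto_of_tendsto_of_le_of_le'
    (g := fun y : ℝ => -(y⁻¹)) (h := fun y : ℝ => y⁻¹)
    ?_ ?_ ?_ ?_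
  · simpa using (tendsto_inv_atTop_zero (𝕜 := ℝ)).neg
  · exact tendsto_inv_atTop_zero
  · filter_upwards [eventually_ge_atTop (2:ℝ)] with y hy
    exact (key y hy).1
  · filter_upwards [eventually_ge_atTop (2:ℝ)] with y hy
    exact (key y hy).2
end
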